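/- arXiv:2605.08973 — 6 statements merged into one kernel-verified Lean document; each statement's English description precedes it below -/
import Mathlib

section
/- If A is a real n×n matrix with rank at most r (where 1 ≤ r ≤ n) and with infinity operator norm at most 1, then the trace of A is at most r. -/
/-!
Over `ℂ`, the trace of `A` is the sum of its eigenvalues counted with algebraic multiplicity.
By Gershgorin's theorem every eigenvalue lies in the closed unit disc, so each contributes at
most `1` to the real part of the trace, and the eigenvalue `0` contributes nothing. Its
algebraic multiplicity is at least its geometric multiplicity `n - rank A`, so at most
`rank A` eigenvalues contribute at all.
-/

open Polynomial

theorem Multiset.re_sum_add_count_zero_le_card (s : Multiset ℂ) (hs : ∀ z ∈ s, ‖z‖ ≤ 1) :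
    s.sum.re + s.count 0 ≤ Multiset.card s := by
  induction s using Multiset.induction_on with
  | empty => simp
  | cons a s ih =>
    have ih := ih fun z hz => hs z (Multiset.mem_cons_of_mem hz)
    by_cases ha : a = 0
    · subst ha
      simp only [Multiset.sum_cons, zero_add, Multiset.count_cons_self, Multiset.card_cons]
      push_cast
      linarith
    · have hre : a.re ≤ 1 := (Complex.re_le_norm a).trans (hs a (Multiset.mem_cons_self a s))
      simp only [Multiset.sum_cons, Complex.add_re, Multiset.count_cons_of_ne (Ne.symm ha),
        Multiset.card_cons]
      push_cast
      linarith

namespace Matrix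

variable {n : Type*} [Fintype n] [DecidableEq n]

theorem norm_le_of_isRoot_charpoly {K : Type*} [NormedField K] {B : Matrix n n K} {c : ℝ}
    (hB : ∀ i, ∑ j, ‖B i j‖ ≤ c) {μ : K} (hμ : B.charpoly.IsRoot μ) : ‖μ‖ ≤ c := by
  have heig : Module.End.HasEigenvalue B.toLin' μ := by
    rwa [Module.End.hasEigenvalue_iff_isRoot_charpoly, charpoly_toLin']
  obtain ⟨k, hk⟩ := eigenvalue_mem_ball heig
  rw [mem_closedBall_iff_norm] at hk
  calc ‖μ‖ ≤ ‖μ - B k k‖ + ‖B k k‖ := norm_le_norm_sub_add μ (B k k)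
    _ ≤ ∑ j ∈ Finset.univ.erase k, ‖B k j‖ + ‖B k k‖ := by gcongr
    _ = ∑ j, ‖B k j‖ := Finset.sum_erase_add _ _ (Finset.mem_univ k)
    _ ≤ c := hB k

theorem card_le_rank_add_rootMultiplicity_zero_charpoly {K : Type*} [Field K]
    (A : Matrix n n K) : Fintype.card n ≤ A.rank + A.charpoly.rootMultiplicity 0 := by
  have hker : Module.finrank K (LinearMap.ker A.toLin') ≤ A.charpoly.rootMultiplicity 0 := by
    rw [← Module.End.eigenspace_zero, ← charpoly_toLin']
    exact LinearMap.finrank_eigenspace_le _ 0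
  have hrankNullity := LinearMap.finrank_range_add_finrank_ker A.toLin'
  rw [Module.finrank_fintype_fun_eq_card] at hrankNullity
  rw [rank, ← toLin'_apply']
  omega

theorem re_trace_add_rootMultiplicity_zero_charpoly_le (B : Matrix n n ℂ)
    (hB : ∀ i, ∑ j, ‖B i j‖ ≤ 1) :
    B.trace.re + B.charpoly.rootMultiplicity 0 ≤ Fintype.card n := by
  have hroots : ∀ z ∈ B.charpoly.roots, ‖z‖ ≤ 1 := fun z hz =>
    norm_le_of_isRoot_charpoly hB (isRoot_of_mem_roots hz)
  have hcard : Multiset.card B.charpoly.roots = Fintype.card n := by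
    rw [← (IsAlgClosed.splits B.charpoly).natDegree_eq_card_roots, charpoly_natDegree_eq_dim]
  rw [trace_eq_sum_roots_charpoly, ← count_roots, ← hcard]
  exact Multiset.re_sum_add_count_zero_le_card _ hroots

end Matrix

theorem trace_le_rank_of_norm_le_one_general
    {n r : ℕ}
    (A : Matrix (Fin n) (Fin n) ℝ)
    (hrank : A.rank ≤ r)
    (hnorm : ∀ i, ∑ j, |A i j| ≤ 1) :
    A.trace ≤ r := by
  set B := A.map Complex.ofRealHom
  have hB : ∀ i, ∑ j, ‖B i j‖ ≤ 1 := by simpa [B] using hnorm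
  have htrace : B.trace.re = A.trace := by simp [B, Matrix.trace]
  have hmult : B.charpoly.rootMultiplicity 0 = A.charpoly.rootMultiplicity 0 := by
    rw [Matrix.charpoly_map, ← map_zero Complex.ofRealHom,
      ← eq_rootMultiplicity_map Complex.ofRealHom.injective]
  have hbound := B.re_trace_add_rootMultiplicity_zero_charpoly_le hB
  rw [htrace, hmult, Fintype.card_fin] at hbound
  have hcount : (n : ℝ) ≤ r + A.charpoly.rootMultiplicity 0 := by
    have := A.card_le_rank_add_rootMultiplicity_zero_charpoly
    rw [Fintype.card_fin] at this
    exact_mod_cast this.trans (by omega)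
  linarith

theorem trace_le_rank_of_norm_le_one
    {n r : ℕ} (hr1 : 1 ≤ r) (hrn : r ≤ n)
    (A : Matrix (Fin n) (Fin n) ℝ)
    (hrank : A.rank ≤ r)
    (hnorm : ∀ i, ∑ j, |A i j| ≤ 1) :
    A.trace ≤ r :=
  trace_le_rank_of_norm_le_one_general A hrank hnorm
end

section
/- Let n ≥ 4 be even. Every (n−2)-dimensional linear subspace V of ℝ^n contains a nonzero vector x such that there exists an index i with |x_i| ≥ (n/2 − 1)·|x_j| for all j ≠ i. -/
/-!
Let `φ : ℝⁿ → ℝ²` be a surjection with kernel `V` and `w k = φ eₖ`. A vector `t - c • eⱼ ∈ V`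
with `tⱼ = 0`, `|tₖ| ≤ 1` and `c = n/2 - 1` exists iff `c • wⱼ` lies in the zonotope
`∑_{k ≠ j} [-wₖ, wₖ]`.
Writing every functional on `ℝ²` as `det(·, u)`, Hahn–Banach reduces this to
`(n/2) |det(wⱼ, u)| ≤ N(u) := ∑ₘ |det(wₘ, u)|` for all `u`. By Krein–Milman it suffices to check
this at the extreme points of the unit ball of `N`, and these lie on the lines `ℝ wₖ`: elsewhere the
signs of all `det(wₘ, u)` are locally constant, so `N` is constant along
`∑ₘ sign(det(wₘ, u)) wₘ`. Finally, summing the Plücker relation over all pairs gives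
`|det(wⱼ, wₖ)| ∑ₗ N(wₗ) ≤ 2 N(wⱼ) N(wₖ)`, whence `n |det(wⱼ, wₖ)| ≤ 2 N(wₖ)` for the `j`
minimising `N(wⱼ)`.
-/

open Finset

theorem LinearMap.pi_apply_eq_sum_univ_single {ι M : Type*} [Fintype ι] [DecidableEq ι]
    [AddCommGroup M] [Module ℝ M] (φ : (ι → ℝ) →ₗ[ℝ] M) (x : ι → ℝ) :
    φ x = ∑ k, x k • φ (Pi.single k 1) := by
  conv_lhs => rw [← univ_sum_single x, map_sum]
  refine sum_congr rfl fun k _ => ?_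
  rw [← map_smul, ← Pi.single_smul, smul_eq_mul, mul_one]

theorem abs_add_eq_abs_add_sign_mul {d e : ℝ} (h : |e| ≤ |d|) :
    |d + e| = |d| + SignType.sign d * e := by
  rcases lt_trichotomy d 0 with hd | rfl | hd
  · rw [abs_of_neg hd, sign_neg hd, abs_of_nonpos (by linarith [le_abs_self e, abs_of_neg hd]),
      SignType.coe_neg, SignType.coe_one]
    ring
  · simp_all
  · rw [abs_of_pos hd, sign_pos hd, abs_of_nonneg (by linarith [neg_abs_le e, abs_of_pos hd]),
      SignType.coe_one, one_mul]

theorem Submodule.exists_surjective_prod_ker_eq {K E : Type*} [Field K] [AddCommGroup E]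
    [Module K E] [FiniteDimensional K E] (V : Submodule K E)
    (hV : Module.finrank K V + 2 = Module.finrank K E) :
    ∃ φ : E →ₗ[K] K × K, Function.Surjective φ ∧ LinearMap.ker φ = V := by
  have hQ : Module.finrank K (E ⧸ V) = Module.finrank K (K × K) := by
    have := V.finrank_quotient_add_finrank
    simp only [Module.finrank_prod, Module.finrank_self]
    omega
  let e := LinearEquiv.ofFinrankEq _ _ hQ
  refine ⟨e.toLinearMap ∘ₗ V.mkQ, e.surjective.comp V.mkQ_surjective, ?_⟩
  rw [LinearEquiv.ker_comp, Submodule.ker_mkQ]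

namespace CodimTwo

def det2 : ℝ × ℝ →ₗ[ℝ] ℝ × ℝ →ₗ[ℝ] ℝ :=
  LinearMap.mk₂ ℝ (fun a b => a.1 * b.2 - a.2 * b.1)
    (fun _ _ _ => by simp only [Prod.fst_add, Prod.snd_add]; ring)
    (fun _ _ _ => by simp only [Prod.smul_fst, Prod.smul_snd, smul_eq_mul]; ring)
    (fun _ _ _ => by simp only [Prod.fst_add, Prod.snd_add]; ring)
    (fun _ _ _ => by simp only [Prod.smul_fst, Prod.smul_snd, smul_eq_mul]; ring)

theorem det2_apply (a b : ℝ × ℝ) : det2 a b = a.1 * b.2 - a.2 * b.1 := rfl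

theorem det2_self (a : ℝ × ℝ) : det2 a a = 0 := by
  rw [det2_apply]; ring

theorem abs_det2_comm (a b : ℝ × ℝ) : |det2 a b| = |det2 b a| := by
  rw [← abs_neg, det2_apply, det2_apply, neg_sub, mul_comm a.1, mul_comm a.2]

theorem det2_plucker (a b c d : ℝ × ℝ) :
    det2 a c * det2 b d = det2 a b * det2 c d + det2 a d * det2 b c := by
  simp only [det2_apply]; ring

theorem exists_eq_smul_of_det2_eq_zero {a u : ℝ × ℝ} (ha : a ≠ 0) (h : det2 a u = 0) :
    ∃ t : ℝ, u = t • a := by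
  obtain ⟨p, q⟩ := a
  obtain ⟨x, y⟩ := u
  rw [det2_apply] at h
  dsimp only at h
  by_cases hp : p = 0
  · have hq : q ≠ 0 := fun hq => ha (by rw [hp, hq]; rfl)
    refine ⟨y / q, Prod.ext ?_ ?_⟩ <;> simp only [Prod.smul_mk, smul_eq_mul]
    · subst hp; field_simp; simpa [hq] using h
    · field_simp
  · refine ⟨x / p, Prod.ext ?_ ?_⟩ <;> simp only [Prod.smul_mk, smul_eq_mul]
    · field_simp
    · field_simp; linarith

theorem exists_forall_eq_det2 (f : ℝ × ℝ →L[ℝ] ℝ) : ∃ u, ∀ a, f a = det2 a u := by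
  refine ⟨(-f (0, 1), f (1, 0)), fun a => ?_⟩
  have ha : a = a.1 • ((1 : ℝ), (0 : ℝ)) + a.2 • ((0 : ℝ), (1 : ℝ)) := by ext <;> simp
  conv_lhs => rw [ha]
  rw [map_add, map_smul, map_smul, det2_apply, smul_eq_mul, smul_eq_mul]
  ring

variable {ι : Type*} [Fintype ι]

def detSeminorm (w : ι → ℝ × ℝ) : Seminorm ℝ (ℝ × ℝ) :=
  Seminorm.of (fun u => ∑ m, |det2 (w m) u|)
    (fun u v => by
      simp only [map_add, ← sum_add_distrib]
      exact sum_le_sum fun m _ => abs_add_le _ _)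
    (fun t u => by simp only [map_smul, smul_eq_mul, abs_mul, Real.norm_eq_abs, mul_sum])

theorem detSeminorm_apply (w : ι → ℝ × ℝ) (u : ℝ × ℝ) :
    detSeminorm w u = ∑ m, |det2 (w m) u| := rfl

theorem abs_det2_mul_sum_detSeminorm_le (w : ι → ℝ × ℝ) (j k : ι) :
    |det2 (w j) (w k)| * ∑ l, detSeminorm w (w l) ≤
      2 * (detSeminorm w (w j) * detSeminorm w (w k)) := by
  have hsymm (i : ι) : detSeminorm w (w i) = ∑ m, |det2 (w i) (w m)| :=
    sum_congr rfl fun m _ => abs_det2_comm _ _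
  calc |det2 (w j) (w k)| * ∑ l, detSeminorm w (w l)
      = ∑ l, ∑ m, |det2 (w j) (w k) * det2 (w m) (w l)| := by
        simp only [detSeminorm_apply, mul_sum, abs_mul]
    _ ≤ ∑ l, ∑ m, (|det2 (w j) (w m)| * |det2 (w k) (w l)| +
          |det2 (w j) (w l)| * |det2 (w k) (w m)|) := by
        gcongr with l _ m _
        rw [det2_plucker, abs_det2_comm (w k) (w m), ← abs_mul, ← abs_mul]
        exact abs_add_le _ _
    _ = 2 * (detSeminorm w (w j) * detSeminorm w (w k)) := by
        rw [hsymm, hsymm, sum_mul_sum, two_mul]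
        simp only [sum_add_distrib]
        rw [sum_comm]

theorem exists_forall_card_mul_abs_det2_le [Nonempty ι] (w : ι → ℝ × ℝ) :
    ∃ j, ∀ k, (Fintype.card ι : ℝ) * |det2 (w j) (w k)| ≤ 2 * detSeminorm w (w k) := by
  obtain ⟨j, -, hj⟩ := exists_min_image univ (fun l => detSeminorm w (w l)) univ_nonempty
  refine ⟨j, fun k => ?_⟩
  have hsum : (Fintype.card ι : ℝ) * detSeminorm w (w j) ≤ ∑ l, detSeminorm w (w l) := by
    simpa using card_nsmul_le_sum univ _ _ hj
  have hle : |det2 (w j) (w k)| ≤ detSeminorm w (w j) := by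
    rw [abs_det2_comm]
    exact single_le_sum (f := fun m => |det2 (w m) (w j)|) (fun _ _ => abs_nonneg _) (mem_univ k)
  have key := abs_det2_mul_sum_detSeminorm_le w j k
  rcases (apply_nonneg (detSeminorm w) (w j)).eq_or_lt with h0 | hpos
  · rw [le_antisymm (hle.trans h0.ge) (abs_nonneg _), mul_zero]
    positivity
  · refine le_of_mul_le_mul_left ?_ hpos
    nlinarith [mul_le_mul_of_nonneg_left hsum (abs_nonneg (det2 (w j) (w k)))]

theorem exists_det2_eq_zero_of_mem_extremePoints [Nonempty ι] (w : ι → ℝ × ℝ) {u : ℝ × ℝ}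
    (hu : u ∈ ((detSeminorm w).closedBall 0 1).extremePoints ℝ) : ∃ k, det2 (w k) u = 0 := by
  by_contra! hne
  set σ : ι → ℝ := fun m => SignType.sign (det2 (w m) u)
  set s := ∑ m, σ m • w m
  have hs_apply (v : ℝ × ℝ) : det2 s v = ∑ m, σ m * det2 (w m) v := by
    simp only [s, map_sum, map_smul, LinearMap.sum_apply, LinearMap.smul_apply,
      smul_eq_mul]
  have hs : s ≠ 0 := by
    intro h0
    have hpos : 0 < ∑ m, |det2 (w m) u| :=
      sum_pos (fun m _ => abs_pos.2 (hne m)) univ_nonempty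
    have := hs_apply u
    simp only [h0, map_zero, LinearMap.zero_apply, σ, sign_mul_self] at this
    linarith
  have hmove (ε : ℝ) (hε : ∀ m, |ε * det2 (w m) s| ≤ |det2 (w m) u|) :
      detSeminorm w (u + ε • s) = detSeminorm w u := by
    simp only [detSeminorm_apply, map_add, map_smul, smul_eq_mul,
      fun m => abs_add_eq_abs_add_sign_mul (hε m), sum_add_distrib, add_eq_left]
    calc ∑ m, σ m * (ε * det2 (w m) s) = ε * det2 s s := by
          rw [hs_apply, mul_sum]
          exact sum_congr rfl fun m _ => by ring
      _ = 0 := by rw [det2_self, mul_zero]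
  have hev : ∀ᶠ ε in nhds (0 : ℝ), ∀ m, |ε * det2 (w m) s| ≤ |det2 (w m) u| :=
    Filter.eventually_all.2 fun m => (ContinuousAt.eventually_lt (by fun_prop) continuousAt_const
      (by simpa using hne m)).mono fun _ => le_of_lt
  obtain ⟨ε, hε, hε0⟩ := ((hev.filter_mono nhdsWithin_le_nhds).and
    (self_mem_nhdsWithin (s := Set.Ioi 0))).exists
  have hmem (v : ℝ × ℝ) (hv : detSeminorm w v = detSeminorm w u) :
      v ∈ (detSeminorm w).closedBall 0 1 := by
    rw [Seminorm.mem_closedBall_zero, hv, ← Seminorm.mem_closedBall_zero]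
    exact hu.1
  have := (mem_extremePoints.1 hu).2 (u + ε • s) (hmem _ (hmove ε hε))
    (u + (-ε) • s) (hmem _ (hmove (-ε) (by simpa using hε)))
    ⟨1 / 2, 1 / 2, by norm_num, by norm_num, by norm_num, by module⟩
  have : ε • s = 0 := by simpa using this.1
  exact hs ((smul_eq_zero.1 this).resolve_left (ne_of_gt hε0))

variable {w : ι → ℝ × ℝ}

theorem isCompact_closedBall_detSeminorm (hw : ∀ u, (∀ m, det2 (w m) u = 0) → u = 0) :
    IsCompact ((detSeminorm w).closedBall 0 1) := by
  let Φ : ℝ × ℝ →ₗ[ℝ] ι → ℝ := LinearMap.pi fun m => det2 (w m)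
  have hΦ : Topology.IsClosedEmbedding Φ :=
    LinearMap.isClosedEmbedding_of_injective (LinearMap.ker_eq_bot'.2 fun u (hu : Φ u = 0) =>
      hw u fun m => congrFun hu m)
  have hK : IsCompact {y : ι → ℝ | ∑ m, |y m| ≤ 1} := by
    refine (isCompact_closedBall (0 : ι → ℝ) 1).of_isClosed_subset
      (isClosed_le (by fun_prop) continuous_const) fun y hy => ?_
    rw [mem_closedBall_zero_iff, pi_norm_le_iff_of_nonneg zero_le_one]
    exact fun m => (single_le_sum (f := fun m => |y m|) (fun _ _ => abs_nonneg _)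
      (mem_univ m)).trans hy
  convert hΦ.isCompact_preimage hK using 1
  ext u
  simp [detSeminorm_apply, Φ]

theorem abs_le_detSeminorm (hw : ∀ u, (∀ m, det2 (w m) u = 0) → u = 0) (hw0 : ∀ k, w k ≠ 0)
    (ℓ : ℝ × ℝ →ₗ[ℝ] ℝ) (hℓ : ∀ k, |ℓ (w k)| ≤ detSeminorm w (w k)) (u : ℝ × ℝ) :
    |ℓ u| ≤ detSeminorm w u := by
  have : Nonempty ι := by
    by_contra! h
    exact one_ne_zero (congrArg Prod.fst (hw (1, 0) fun m => h.elim m))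
  have hext : ((detSeminorm w).closedBall 0 1).extremePoints ℝ ⊆ {v | ℓ v ≤ 1} := fun v hv => by
    obtain ⟨k, hk⟩ := exists_det2_eq_zero_of_mem_extremePoints w hv
    obtain ⟨t, rfl⟩ := exists_eq_smul_of_det2_eq_zero (hw0 k) hk
    calc ℓ (t • w k) ≤ |t| * |ℓ (w k)| := by
          rw [map_smul, smul_eq_mul, ← abs_mul]
          exact le_abs_self _
      _ ≤ |t| * detSeminorm w (w k) := by gcongr; exact hℓ k
      _ = detSeminorm w (t • w k) := by rw [map_smul_eq_mul, Real.norm_eq_abs]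
      _ ≤ 1 := (Seminorm.mem_closedBall_zero _).1 hv.1
  have hB : (detSeminorm w).closedBall 0 1 ⊆ {v | ℓ v ≤ 1} := by
    rw [← closure_convexHull_extremePoints (isCompact_closedBall_detSeminorm hw)
      (Seminorm.convex_closedBall _ _ _)]
    exact closure_minimal (convexHull_min hext (convex_halfSpace_le ℓ.isLinear 1))
      (isClosed_le (LinearMap.continuous_of_finiteDimensional ℓ) continuous_const)
  have hle (v : ℝ × ℝ) : ℓ v ≤ detSeminorm w v := by
    rcases (apply_nonneg (detSeminorm w) v).eq_or_lt with h0 | hpos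
    · have hv : v = 0 := hw v fun m => abs_eq_zero.1 <|
        (sum_eq_zero_iff_of_nonneg fun _ _ => abs_nonneg _).1 h0.symm m (mem_univ m)
      simp [hv]
    · have hv : (detSeminorm w v)⁻¹ • v ∈ (detSeminorm w).closedBall 0 1 := by
        rw [Seminorm.mem_closedBall_zero, map_smul_eq_mul, norm_inv, Real.norm_of_nonneg hpos.le,
          inv_mul_cancel₀ hpos.ne']
      have := hB hv
      rwa [Set.mem_ofPred_eq, map_smul, smul_eq_mul, inv_mul_le_iff₀ hpos, mul_one] at this
  refine abs_le.2 ⟨?_, hle u⟩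
  linarith [show -ℓ u ≤ detSeminorm w u by simpa using hle (-u)]

theorem mem_image_pi_of_forall_le {E : Type*} [NormedAddCommGroup E] [NormedSpace ℝ E]
    [FiniteDimensional ℝ E] [DecidableEq ι] (φ : (ι → ℝ) →ₗ[ℝ] E) (j : ι) {p : E}
    (h : ∀ f : StrongDual ℝ E, f p ≤ ∑ k ∈ univ.erase j, |f (φ (Pi.single k 1))|) :
    p ∈ φ '' Set.univ.pi fun k => if k = j then {0} else Set.Icc (-1) 1 := by
  have hbox : IsCompact (Set.univ.pi fun k => if k = j then {0} else Set.Icc (-1 : ℝ) 1) :=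
    isCompact_univ_pi fun k => by split_ifs <;> [exact isCompact_singleton; exact isCompact_Icc]
  have hconv : Convex ℝ (Set.univ.pi fun k => if k = j then {0} else Set.Icc (-1 : ℝ) 1) :=
    convex_pi fun k _ => by split_ifs <;> [exact convex_singleton 0; exact convex_Icc _ _]
  rw [← iInter_halfSpaces_eq (hconv.linear_image φ)
    (hbox.image (LinearMap.continuous_of_finiteDimensional φ)).isClosed]
  refine Set.mem_iInter.2 fun f => ?_
  set t : ι → ℝ := fun k => if k = j then 0 else SignType.sign (f (φ (Pi.single k 1)))
  have ht : t ∈ Set.univ.pi fun k => if k = j then {0} else Set.Icc (-1 : ℝ) 1 := by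
    refine Set.mem_univ_pi.2 fun k => ?_
    by_cases hk : k = j
    · simp [t, hk]
    · simp only [t, hk, if_false]
      generalize SignType.sign (f (φ (Pi.single k 1))) = σ
      cases σ <;> norm_num
  refine ⟨φ t, ⟨t, ht, rfl⟩, (h f).trans_eq ?_⟩
  rw [LinearMap.pi_apply_eq_sum_univ_single φ t, map_sum, ← add_sum_erase _ _ (mem_univ j)]
  simp only [map_smul, smul_eq_mul, t, if_true, zero_mul, zero_add]
  refine sum_congr rfl fun k hk => ?_
  rw [if_neg (ne_of_mem_erase hk), sign_mul_self]

theorem exists_mem_ker_abs_le_of_forall_le {E : Type*} [NormedAddCommGroup E]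
    [NormedSpace ℝ E] [FiniteDimensional ℝ E] [DecidableEq ι] (φ : (ι → ℝ) →ₗ[ℝ] E) (j : ι)
    {c : ℝ} (hc : 0 < c)
    (h : ∀ f : StrongDual ℝ E,
      (c + 1) * |f (φ (Pi.single j 1))| ≤ ∑ k, |f (φ (Pi.single k 1))|) :
    ∃ x ∈ LinearMap.ker φ, x ≠ 0 ∧ ∀ k, k ≠ j → c * |x k| ≤ |x j| := by
  obtain ⟨t, ht, hφt⟩ := mem_image_pi_of_forall_le φ j (p := c • φ (Pi.single j 1)) fun f => by
    have := h f
    rw [← add_sum_erase _ _ (mem_univ j)] at this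
    rw [map_smul, smul_eq_mul]
    nlinarith [le_abs_self (f (φ (Pi.single j 1)))]
  have htj : t j = 0 := by simpa using ht j (Set.mem_univ j)
  refine ⟨t - c • Pi.single j 1, ?_, fun h => ?_, fun k hk => ?_⟩
  · rw [LinearMap.mem_ker, map_sub, map_smul, hφt, sub_self]
  · simpa [htj, hc.ne'] using congrFun h j
  · have htk : t k ∈ Set.Icc (-1) 1 := by simpa [hk] using ht k (Set.mem_univ k)
    simp only [Pi.sub_apply, Pi.smul_apply, Pi.single_eq_same, Pi.single_eq_of_ne hk, htj,
      smul_eq_mul, mul_zero, sub_zero, mul_one, zero_sub, abs_neg, abs_of_pos hc]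
    exact mul_le_of_le_one_right hc.le (abs_le.2 htk)

theorem eq_zero_of_forall_det2_eq_zero [DecidableEq ι] {φ : (ι → ℝ) →ₗ[ℝ] ℝ × ℝ}
    (hφ : Function.Surjective φ) {u : ℝ × ℝ} (hu : ∀ m, det2 (φ (Pi.single m 1)) u = 0) :
    u = 0 := by
  have h (y : ℝ × ℝ) : det2 y u = 0 := by
    obtain ⟨x, rfl⟩ := hφ y
    simp [LinearMap.pi_apply_eq_sum_univ_single φ x, hu]
  have h1 := h (1, 0)
  have h2 := h (0, 1)
  simp only [det2_apply] at h1 h2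
  ext <;> simp_all

theorem exists_ker_abs_le (φ : (ι → ℝ) →ₗ[ℝ] ℝ × ℝ)
    (hφ : Function.Surjective φ) (hι : 2 < Fintype.card ι) :
    ∃ x ∈ LinearMap.ker φ, x ≠ 0 ∧
      ∃ i, ∀ j, j ≠ i → ((Fintype.card ι : ℝ) / 2 - 1) * |x j| ≤ |x i| := by
  classical
  set w : ι → ℝ × ℝ := fun k => φ (Pi.single k 1)
  by_cases hw0 : ∃ i, w i = 0
  · obtain ⟨i, hi⟩ := hw0
    exact ⟨Pi.single i 1, hi, by simp, i, fun j hj => by simp [Pi.single_eq_of_ne hj]⟩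
  push Not at hw0
  have : Nonempty ι := Fintype.card_pos_iff.1 (by omega)
  obtain ⟨j, hj⟩ := exists_forall_card_mul_abs_det2_le w
  have hn : (2 : ℝ) < Fintype.card ι := by exact_mod_cast hι
  have hbound (u : ℝ × ℝ) : (Fintype.card ι / 2 : ℝ) * |det2 (w j) u| ≤ detSeminorm w u := by
    have := abs_le_detSeminorm (fun _ => eq_zero_of_forall_det2_eq_zero hφ) hw0
      ((Fintype.card ι / 2 : ℝ) • det2 (w j)) (fun k => by
        rw [LinearMap.smul_apply, smul_eq_mul, abs_mul, abs_of_pos (by linarith)]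
        linarith [hj k]) u
    rwa [LinearMap.smul_apply, smul_eq_mul, abs_mul, abs_of_pos (by linarith)] at this
  obtain ⟨x, hx, hx0, hxj⟩ := exists_mem_ker_abs_le_of_forall_le φ j
      (c := (Fintype.card ι : ℝ) / 2 - 1) (by linarith) fun f => by
    obtain ⟨u, hu⟩ := exists_forall_eq_det2 f
    simp only [hu, sub_add_cancel]
    exact hbound u
  exact ⟨x, hx, hx0, j, hxj⟩

end CodimTwo

theorem exists_vector_large_ratio_codim_two_general
    {n : ℕ} (hn : 4 ≤ n)
    (V : Submodule ℝ (Fin n → ℝ))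
    (hdim : Module.finrank ℝ V = n - 2) :
    ∃ x : Fin n → ℝ, x ∈ V ∧ x ≠ 0 ∧
      ∃ i : Fin n, ∀ j : Fin n, j ≠ i → |x i| ≥ ((n : ℝ) / 2 - 1) * |x j| := by
  obtain ⟨φ, hφ, rfl⟩ := V.exists_surjective_prod_ker_eq (by simp; omega)
  simpa using CodimTwo.exists_ker_abs_le φ hφ (by simp; omega)

theorem exists_vector_large_ratio_codim_two
    {n : ℕ} (hn : 4 ≤ n) (heven : Even n)
    (V : Submodule ℝ (Fin n → ℝ))
    (hdim : Module.finrank ℝ V = n - 2) :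
    ∃ x : Fin n → ℝ, x ∈ V ∧ x ≠ 0 ∧
      ∃ i : Fin n, ∀ j : Fin n, j ≠ i → |x i| ≥ ((n : ℝ) / 2 - 1) * |x j| :=
  exists_vector_large_ratio_codim_two_general hn V hdim
end

section
/- Let n, k be integers with k > n − k ≥ 2 and (n − k) | k. Every k-dimensional linear subspace V of ℝ^n contains a nonzero vector x such that there exists an index i with |x_i| ≥ (k/(n−k))·|x_j| for all j ≠ i. -/
open Module Metric Finset

/-!
Write `m = n - k`. It suffices to find a coordinate vector `e_s` at sup-distance at most `m / n`
from `V`: a nearest point `v ∈ V` then has `v s ≥ k / n` and `|v j| ≤ m / n` for `j ≠ s`.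
By Hahn–Banach, `dist(e_s, V) = p_s s` for some `p_s` with `‖p_s‖₁ ≤ 1` in the annihilator of `V`,
a space of dimension `m`. Choosing `v_1, …, v_m` in the `ℓ¹` unit ball of the annihilator with
maximal determinant, Cramer's rule writes each `p_s` as `∑ i, c_{s,i} v_i` with `|c_{s,i}| ≤ 1`,
so `∑ s, p_s s ≤ ∑ i, ‖v_i‖₁ ≤ m`, and some `dist(e_s, V)` is at most `m / n`.
-/

section MaximalDeterminant

variable {E : Type*} [AddCommGroup E] [Module ℝ E] [TopologicalSpace E] [IsTopologicalAddGroup E]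
  [ContinuousSMul ℝ E] [T2Space E] [FiniteDimensional ℝ E]

theorem Module.Basis.continuous_det {ι : Type*} [Fintype ι] [DecidableEq ι] (b : Basis ι ℝ E) :
    Continuous fun w : ι → E => b.det w := by
  simp only [b.det_apply]
  refine Continuous.matrix_det (continuous_matrix fun i j => ?_)
  simp only [Basis.toMatrix_apply, ← b.coord_apply]
  exact (b.coord i).continuous_of_finiteDimensional.comp (continuous_apply j)

theorem IsCompact.exists_forall_mem_eq_sum_smul_abs_le_one {S : Set E} (hS : IsCompact S)
    (habs : ∀ u : E, ∃ r : ℝ, r ≠ 0 ∧ r • u ∈ S) :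
    ∃ v : Fin (finrank ℝ E) → E, (∀ i, v i ∈ S) ∧
      ∀ u ∈ S, ∃ c : Fin (finrank ℝ E) → ℝ, (∀ i, |c i| ≤ 1) ∧ ∑ i, c i • v i = u := by
  let b := finBasis ℝ E
  choose r hr0 hrS using fun i => habs (b i)
  obtain ⟨v, hvS, hvmax⟩ := (isCompact_univ_pi fun _ => hS).exists_isMaxOn ⟨_, fun i _ => hrS i⟩
    b.continuous_det.abs.continuousOn
  have hdet : b.det v ≠ 0 := by
    have : b.det (fun i => r i • b i) ≠ 0 := by
      rw [AlternatingMap.map_smul_univ, b.det_self, smul_eq_mul, mul_one]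
      exact prod_ne_zero_iff.mpr fun i _ => hr0 i
    exact abs_pos.mp ((abs_pos.mpr this).trans_le (hvmax fun i _ => hrS i))
  obtain ⟨hli, hspan⟩ := b.is_basis_iff_det.mpr (Ne.isUnit hdet)
  let v' := Basis.mk hli hspan.ge
  refine ⟨v, fun i => hvS i (Set.mem_univ i), fun u hu => ⟨fun i => v'.coord i u, fun i => ?_, ?_⟩⟩
  · have hcramer : b.det v * v'.coord i u = b.det (Function.update v i u) :=
      LinearMap.congr_fun (b.det_smul_mk_coord_eq_det_update hli hspan.ge i) u
    have hle : |b.det (Function.update v i u)| ≤ |b.det v| := by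
      refine hvmax fun j _ => ?_
      rcases eq_or_ne j i with rfl | hji
      · simpa using hu
      · simpa [hji] using hvS j (Set.mem_univ j)
    rw [← hcramer, abs_mul] at hle
    exact (mul_le_iff_le_one_right (abs_pos.mpr hdet)).mp hle
  · simpa [v', Basis.coe_mk] using v'.sum_repr u

end MaximalDeterminant

theorem exists_strongDual_norm_le_one_eq_infDist {E : Type*} [SeminormedAddCommGroup E]
    [NormedSpace ℝ E] (V : Submodule ℝ E) (x : E) :
    ∃ f : StrongDual ℝ E, ‖f‖ ≤ 1 ∧ (∀ v ∈ V, f v = 0) ∧ f x = infDist x V := by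
  obtain ⟨g, hg, hgx⟩ := exists_dual_vector'' ℝ (V.mkQ x)
  refine ⟨g.comp V.mkQL, ?_, fun v hv => ?_, ?_⟩
  · refine ContinuousLinearMap.opNorm_le_bound _ zero_le_one fun y => ?_
    calc ‖g (V.mkQ y)‖ ≤ ‖g‖ * ‖V.mkQ y‖ := g.le_opNorm _
      _ ≤ 1 * ‖y‖ := mul_le_mul hg (Submodule.Quotient.norm_mk_le V y) (norm_nonneg _) zero_le_one
  · simp [(Submodule.Quotient.mk_eq_zero V).mpr hv]
  · exact hgx.trans (QuotientAddGroup.norm_mk (S := V.toAddSubgroup) x)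

theorem sum_abs_apply_single_le_norm {ι : Type*} [Fintype ι] [DecidableEq ι]
    (f : StrongDual ℝ (ι → ℝ)) : ∑ t, |f (Pi.single t 1)| ≤ ‖f‖ := by
  let σ : ι → ℝ := fun t => SignType.sign (f (Pi.single t 1))
  have hσ : ‖σ‖ ≤ 1 := (pi_norm_le_iff_of_nonneg zero_le_one).mpr fun t => by
    rcases lt_trichotomy (f (Pi.single t 1)) 0 with h | h | h <;> simp [σ, h]
  calc ∑ t, |f (Pi.single t 1)| = f σ := by
        conv_rhs => rw [pi_eq_sum_univ' σ]
        simp [σ]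
    _ ≤ ‖f‖ * ‖σ‖ := le_trans (le_abs_self _) (f.le_opNorm σ)
    _ ≤ ‖f‖ := mul_le_of_le_one_right (norm_nonneg f) hσ

section LOneBall

variable {ι : Type*} [Fintype ι]

theorem isCompact_setOf_sum_abs_le_one (U : Submodule ℝ (ι → ℝ)) :
    IsCompact {u : U | ∑ t, |(u : ι → ℝ) t| ≤ 1} := by
  have hcont : Continuous fun u : U => ∑ t, |(u : ι → ℝ) t| :=
    continuous_finsetSum _ fun t _ => ((continuous_apply t).comp continuous_subtype_val).abs
  refine isCompact_of_isClosed_isBounded (isClosed_le hcont continuous_const)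
    (isBounded_closedBall (x := 0) (r := 1) |>.subset fun u hu => ?_)
  rw [mem_closedBall_zero_iff]
  change ‖(u : ι → ℝ)‖ ≤ 1
  rw [pi_norm_le_iff_of_nonneg zero_le_one]
  exact fun t => (single_le_sum (fun t _ => abs_nonneg ((u : ι → ℝ) t)) (mem_univ t)).trans hu

theorem sum_diag_le_finrank (U : Submodule ℝ (ι → ℝ)) (p : ι → ι → ℝ) (hpU : ∀ s, p s ∈ U)
    (hp : ∀ s, ∑ t, |p s t| ≤ 1) : ∑ s, p s s ≤ finrank ℝ U := by
  obtain ⟨v, hvS, hrep⟩ :=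
    (isCompact_setOf_sum_abs_le_one U).exists_forall_mem_eq_sum_smul_abs_le_one fun u => by
      have hpos : 0 < ∑ t, |(u : ι → ℝ) t| + 1 := by positivity
      refine ⟨(∑ t, |(u : ι → ℝ) t| + 1)⁻¹, inv_ne_zero hpos.ne', ?_⟩
      simp only [Set.mem_ofPred_eq, Submodule.coe_smul, Pi.smul_apply, smul_eq_mul, abs_mul,
        ← mul_sum, abs_inv, abs_of_pos hpos]
      rw [inv_mul_le_one₀ hpos]
      linarith
  choose c hc1 hcp using fun s => hrep ⟨p s, hpU s⟩ (hp s)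
  have hdiag (s : ι) : p s s ≤ ∑ i, |(v i : ι → ℝ) s| := by
    have hps : p s s = ∑ i, c s i * (v i : ι → ℝ) s := by
      simpa [Finset.sum_apply] using congrArg (fun u : U => (u : ι → ℝ) s) (hcp s).symm
    rw [hps]
    refine sum_le_sum fun i _ => ?_
    calc c s i * (v i : ι → ℝ) s ≤ |c s i| * |(v i : ι → ℝ) s| := by
          rw [← abs_mul]; exact le_abs_self _
      _ ≤ |(v i : ι → ℝ) s| := mul_le_of_le_one_left (abs_nonneg _) (hc1 s i)
  calc ∑ s, p s s ≤ ∑ s, ∑ i, |(v i : ι → ℝ) s| := sum_le_sum fun s _ => hdiag s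
    _ = ∑ i, ∑ s, |(v i : ι → ℝ) s| := sum_comm
    _ ≤ ∑ _i : Fin (finrank ℝ U), (1 : ℝ) := sum_le_sum fun i _ => hvS i
    _ = finrank ℝ U := by simp

end LOneBall

section DistanceToCoordinateVectors

variable {ι : Type*} [Fintype ι] [DecidableEq ι]

theorem sum_infDist_single_le (V : Submodule ℝ (ι → ℝ)) :
    ∑ s, infDist (Pi.single s 1 : ι → ℝ) V ≤ Fintype.card ι - finrank ℝ V := by
  choose f hf1 hfV hfx using fun s => exists_strongDual_norm_le_one_eq_infDist V (Pi.single s 1)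
  let U := V.dualAnnihilator.map (dotProductEquiv ℝ ι).symm.toLinearMap
  have hU : finrank ℝ U + finrank ℝ V = Fintype.card ι := by
    rw [LinearEquiv.finrank_map_eq, add_comm, Subspace.finrank_add_finrank_dualAnnihilator_eq,
      finrank_fintype_fun_eq_card]
  let p (s : ι) : ι → ℝ := (dotProductEquiv ℝ ι).symm (f s)
  have hpU (s : ι) : p s ∈ U :=
    Submodule.mem_map_of_mem ((Submodule.mem_dualAnnihilator _).mpr (hfV s))
  have hp (s : ι) : ∑ t, |p s t| ≤ 1 := (sum_abs_apply_single_le_norm (f s)).trans (hf1 s)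
  calc ∑ s, infDist (Pi.single s 1 : ι → ℝ) V = ∑ s, p s s := by simp [p, hfx]
    _ ≤ finrank ℝ U := sum_diag_le_finrank U p hpU hp
    _ = Fintype.card ι - finrank ℝ V := by rw [← hU]; push_cast; ring

theorem exists_dist_single_le [Nonempty ι] (V : Submodule ℝ (ι → ℝ)) :
    ∃ s, ∃ v ∈ V, dist (Pi.single s 1 : ι → ℝ) v ≤
      (Fintype.card ι - finrank ℝ V) / Fintype.card ι := by
  have hcard : (0 : ℝ) < Fintype.card ι := by exact_mod_cast Fintype.card_pos
  have hsum : ∑ s, infDist (Pi.single s 1 : ι → ℝ) V ≤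
      ∑ _s : ι, (Fintype.card ι - finrank ℝ V : ℝ) / Fintype.card ι := by
    rw [sum_const, card_univ, nsmul_eq_mul, mul_div_cancel₀ _ hcard.ne']
    exact sum_infDist_single_le V
  obtain ⟨s, -, hs⟩ := exists_le_of_sum_le univ_nonempty hsum
  obtain ⟨v, hv, hdist⟩ := V.closed_of_finiteDimensional.exists_infDist_eq_dist
    ⟨0, V.zero_mem⟩ (Pi.single s 1 : ι → ℝ)
  exact ⟨s, v, hv, hdist ▸ hs⟩

end DistanceToCoordinateVectors

theorem exists_vector_large_ratio_dvd_general
    {n k : ℕ} (hk : n - k < k)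
    (V : Submodule ℝ (Fin n → ℝ))
    (hdim : Module.finrank ℝ V = k) :
    ∃ x : Fin n → ℝ, x ∈ V ∧ x ≠ 0 ∧
      ∃ i : Fin n, ∀ j : Fin n, j ≠ i → |x i| ≥ ((k : ℝ) / ((n : ℝ) - k)) * |x j| := by
  have hkn : k ≤ n := by simpa [hdim] using V.finrank_le
  have : Nonempty (Fin n) := ⟨⟨0, by omega⟩⟩
  have hk0 : (0 : ℝ) < k := by exact_mod_cast (show 0 < k by omega)
  have hn : (0 : ℝ) < n := by exact_mod_cast (show 0 < n by omega)
  have hkn' : (k : ℝ) ≤ n := by exact_mod_cast hkn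
  obtain ⟨s, v, hv, hdist⟩ := exists_dist_single_le V
  rw [Fintype.card_fin, hdim] at hdist
  have hcoord (j : Fin n) : |(Pi.single s 1 : Fin n → ℝ) j - v j| ≤ (n - k) / n := by
    simpa only [Real.dist_eq] using (dist_le_pi_dist _ _ j).trans hdist
  have hvs : k / n ≤ v s := by
    have h := (abs_le.mp (hcoord s)).2
    rw [Pi.single_eq_same, sub_div, div_self hn.ne'] at h
    linarith
  have hvs_pos : 0 < v s := (div_pos hk0 hn).trans_le hvs
  refine ⟨v, hv, fun h => hvs_pos.ne' (by simp [h]), s, fun j hj => ?_⟩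
  have hvj : |v j| ≤ (n - k) / n := by simpa [Pi.single_eq_of_ne hj] using hcoord j
  rw [ge_iff_le, abs_of_pos hvs_pos]
  calc k / (n - k) * |v j| ≤ k / (n - k) * ((n - k) / n) :=
        mul_le_mul_of_nonneg_left hvj (div_nonneg k.cast_nonneg (sub_nonneg.mpr hkn'))
    _ = k / n * ((n - k) / (n - k)) := by ring
    _ ≤ k / n := mul_le_of_le_one_right (by positivity) (div_self_le_one _)
    _ ≤ v s := hvs

theorem exists_vector_large_ratio_dvd
    {n k : ℕ} (hk : n - k < k) (hnk : 2 ≤ n - k) (hdvd : (n - k) ∣ k)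
    (V : Submodule ℝ (Fin n → ℝ))
    (hdim : Module.finrank ℝ V = k) :
    ∃ x : Fin n → ℝ, x ∈ V ∧ x ≠ 0 ∧
      ∃ i : Fin n, ∀ j : Fin n, j ≠ i → |x i| ≥ ((k : ℝ) / ((n : ℝ) - k)) * |x j| :=
  exists_vector_large_ratio_dvd_general hk V hdim
end

section
/- Let u₀,…,u_{n−1} ∈ ℝ^d and m₀,…,m_{n−1} ∈ ℝ^d with d ≤ n, and suppose Σ_{j=0}^{n−1} |⟨u_i, m_j⟩| ≤ 1 for every i. Then Σ_{i=0}^{n−1} ⟨u_i, m_i⟩ ≤ d. -/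
/-!
The matrix `A = U Mᵀ` with entries `⟨u i, m j⟩` has absolute row sums at most `1`, so by
Gershgorin every eigenvalue of `A` has modulus at most `1`. The `d × d` matrix `Mᵀ U` has the same
trace, and its nonzero eigenvalues are eigenvalues of `A`; over `ℂ` its trace is the sum of its `d`
eigenvalues, hence has modulus at most `d`.
-/

open Polynomial

namespace Matrix

variable {ι m n K : Type*} [Fintype ι] [DecidableEq ι] [Fintype m] [DecidableEq m]
  [Fintype n] [DecidableEq n]

theorem isRoot_charpoly_mul_comm {R : Type*} [CommRing R] [IsDomain R]
    (A : Matrix m n R) (B : Matrix n m R) {μ : R} (hμ : μ ≠ 0)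
    (h : (B * A).charpoly.IsRoot μ) : (A * B).charpoly.IsRoot μ := by
  have := congrArg (eval μ) (charpoly_mul_comm' A B)
  simp only [eval_mul, eval_pow, eval_X, h.eq_zero, mul_zero] at this
  exact (mul_eq_zero.1 this).resolve_left (pow_ne_zero _ hμ)

variable [NormedField K]

theorem norm_le_of_isRoot_charpoly_s12 {A : Matrix ι ι K} {r : ℝ}
    (hA : ∀ i, ∑ j, ‖A i j‖ ≤ r) {μ : K} (hμ : A.charpoly.IsRoot μ) : ‖μ‖ ≤ r := by
  have hμ' : Module.End.HasEigenvalue (toLin' A) μ := by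
    rwa [Module.End.hasEigenvalue_iff_isRoot_charpoly, charpoly_toLin']
  obtain ⟨k, hk⟩ := eigenvalue_mem_ball hμ'
  rw [mem_closedBall_iff_norm] at hk
  calc ‖μ‖ ≤ ‖A k k‖ + ‖μ - A k k‖ := norm_le_norm_add_norm_sub' μ (A k k)
    _ ≤ ‖A k k‖ + ∑ j ∈ Finset.univ.erase k, ‖A k j‖ := by gcongr
    _ = ∑ j, ‖A k j‖ := Finset.add_sum_erase _ (fun j => ‖A k j‖) (Finset.mem_univ k)
    _ ≤ r := hA k

variable [IsAlgClosed K]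

theorem norm_trace_le_of_isRoot_charpoly {A : Matrix ι ι K} {r : ℝ}
    (h : ∀ μ, A.charpoly.IsRoot μ → ‖μ‖ ≤ r) : ‖A.trace‖ ≤ Fintype.card ι * r := by
  rw [trace_eq_sum_roots_charpoly]
  calc ‖A.charpoly.roots.sum‖ ≤ (A.charpoly.roots.map norm).sum := norm_multiset_sum_le _
    _ ≤ (A.charpoly.roots.map norm).card • r :=
        Multiset.sum_le_card_nsmul _ _ <|
          Multiset.forall_mem_map_iff.2 fun μ hμ => h μ (isRoot_of_mem_roots hμ)
    _ = Fintype.card ι * r := by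
        rw [Multiset.card_map, IsAlgClosed.card_roots_eq_natDegree, charpoly_natDegree_eq_dim,
          nsmul_eq_mul]

theorem norm_trace_mul_le (A : Matrix m n K) (B : Matrix n m K) {r : ℝ} (hr : 0 ≤ r)
    (hAB : ∀ i, ∑ j, ‖(A * B) i j‖ ≤ r) : ‖(A * B).trace‖ ≤ Fintype.card n * r := by
  rw [trace_mul_comm]
  refine norm_trace_le_of_isRoot_charpoly fun μ hμ => ?_
  rcases eq_or_ne μ 0 with rfl | hμ0
  · simpa using hr
  · exact norm_le_of_isRoot_charpoly_s12 hAB (isRoot_charpoly_mul_comm A B hμ0 hμ)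

end Matrix

open Matrix in
theorem sum_diag_inner_le_dim_general
    {n d : ℕ}
    (u m : Fin n → (Fin d → ℝ))
    (hnorm : ∀ i, ∑ j, |u i ⬝ᵥ m j| ≤ 1) :
    ∑ i, u i ⬝ᵥ m i ≤ d := by
  let U : Matrix (Fin n) (Fin d) ℂ := (of u).map (↑)
  let M : Matrix (Fin d) (Fin n) ℂ := (of m)ᵀ.map (↑)
  have hUM : U * M = (of u * (of m)ᵀ).map (↑) := (Matrix.map_mul (f := Complex.ofRealHom)).symm
  have hentry : ∀ i j, (of u * (of m)ᵀ) i j = u i ⬝ᵥ m j := fun _ _ => rfl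
  have hbound := norm_trace_mul_le U M zero_le_one fun i => by
    simpa [hUM, hentry] using hnorm i
  have htrace : (U * M).trace = ↑(∑ i, u i ⬝ᵥ m i) := by
    simp only [hUM, trace, diag, map_apply, hentry, Complex.ofReal_sum]
  rw [htrace, Complex.norm_real, Real.norm_eq_abs, Fintype.card_fin, mul_one] at hbound
  exact (le_abs_self _).trans hbound

open Matrix in
theorem sum_diag_inner_le_dim
    {n d : ℕ} (hdn : d ≤ n)
    (u m : Fin n → (Fin d → ℝ))
    (hnorm : ∀ i, ∑ j, |u i ⬝ᵥ m j| ≤ 1) :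
    ∑ i, u i ⬝ᵥ m i ≤ d :=
  sum_diag_inner_le_dim_general u m hnorm
end

section
/- Let k > n − k ≥ 2 with (n−k) | k, set b = n/(n−k), and define V₀ = {x ∈ ℝ^n : Σ_{j=0}^{b−1} x_{i·b + j} = 0 for every i ∈ [0, n−k−1]}. Then V₀ is a k-dimensional subspace of ℝ^n, and for every nonzero x ∈ V₀ and every index t there exists t' ≠ t with |x_{t'}| ≥ |x_t|·(n−k)/k. -/
/-!
`V₀` is the kernel of the block-sum map `ℝⁿ → ℝⁿ⁻ᵏ`, which is surjective (put the value for block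
`i` on its first coordinate), so `dim V₀ = n - (n - k) = k`. For `x ∈ V₀`, the other `b - 1 = k/(n-k)`
coordinates of the block of `t` sum to `-x t`, so one of them has absolute value at least
`|x t| / (b - 1)`.
-/

open Finset

theorem Fin.card_filter_div_eq {n b i : ℕ} (hb : 0 < b) (hi : (i + 1) * b ≤ n) :
    #{t : Fin n | (t : ℕ) / b = i} = b := by
  have hlt : ∀ t ∈ Ico (i * b) ((i + 1) * b), t < n := fun t ht => (mem_Ico.1 ht).2.trans_le hi
  have hblock : ({t : Fin n | (t : ℕ) / b = i} : Finset (Fin n)) = (Ico _ _).attachFin hlt := by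
    ext t
    simp only [mem_filter_univ, mem_attachFin, mem_Ico, Nat.div_eq_iff hb, add_one_mul]
    omega
  rw [hblock, card_attachFin, Nat.card_Ico, add_one_mul, Nat.add_sub_cancel_left]

theorem Finset.exists_ne_abs_div_le_of_sum_eq_zero {ι 𝕜 : Type*} [Field 𝕜] [LinearOrder 𝕜]
    [IsStrictOrderedRing 𝕜] {s : Finset ι} {x : ι → 𝕜} (hsum : ∑ i ∈ s, x i = 0) {t : ι}
    (ht : t ∈ s) (hs : 1 < #s) :
    ∃ t' ∈ s, t' ≠ t ∧ |x t| / ((#s : 𝕜) - 1) ≤ |x t'| := by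
  classical
  have hcard : ((#(s.erase t) : ℕ) : 𝕜) = (#s : 𝕜) - 1 := by
    rw [card_erase_of_mem ht, Nat.cast_sub hs.le, Nat.cast_one]
  have hpos : (0 : 𝕜) < (#s : 𝕜) - 1 := by
    rw [sub_pos]; exact_mod_cast hs
  have hbound : |x t| ≤ ∑ i ∈ s.erase t, |x i| := by
    have hrest : ∑ i ∈ s.erase t, x i = -x t := by
      rw [eq_neg_iff_add_eq_zero, sum_erase_add _ _ ht, hsum]
    calc |x t| = |∑ i ∈ s.erase t, x i| := by rw [hrest, abs_neg]
      _ ≤ ∑ i ∈ s.erase t, |x i| := abs_sum_le_sum_abs _ _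
  obtain ⟨t', ht', hle⟩ := exists_le_of_sum_le (s := s.erase t)
    (f := fun _ => |x t| / ((#s : 𝕜) - 1)) (g := fun i => |x i|)
    (by rw [← card_pos, card_erase_of_mem ht]; omega)
    (by rwa [sum_const, nsmul_eq_mul, hcard, mul_div_cancel₀ _ hpos.ne'])
  exact ⟨t', mem_of_mem_erase ht', ne_of_mem_erase ht', hle⟩

variable (R : Type*) [Semiring R] (n m b : ℕ)

def blockSum : (Fin n → R) →ₗ[R] (Fin m → R) :=
  LinearMap.pi fun i =>
    ∑ t ∈ univ.filter (fun t : Fin n => (t : ℕ) / b = i), LinearMap.proj (R := R) (φ := fun _ => R) t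

variable {R n m b}

@[simp]
theorem blockSum_apply (x : Fin n → R) (i : Fin m) :
    blockSum R n m b x i = ∑ t ∈ univ.filter (fun t : Fin n => (t : ℕ) / b = i), x t := by
  simp [blockSum]

theorem mem_ker_blockSum {x : Fin n → R} :
    x ∈ LinearMap.ker (blockSum R n m b) ↔
      ∀ i < m, ∑ t ∈ univ.filter (fun t : Fin n => (t : ℕ) / b = i), x t = 0 := by
  simp [funext_iff, Fin.forall_iff]

theorem blockSum_surjective (hb : 0 < b) (hmb : m * b ≤ n) :
    Function.Surjective (blockSum R n m b) := by
  intro y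
  have hlt (i : Fin m) : (i : ℕ) * b < n :=
    (Nat.mul_lt_mul_of_pos_right i.isLt hb).trans_le hmb
  refine ⟨∑ j : Fin m, Pi.single (⟨j * b, hlt j⟩ : Fin n) (y j), funext fun i => ?_⟩
  simp only [blockSum_apply, Finset.sum_apply]
  rw [sum_comm]
  simp only [sum_pi_single', mem_filter_univ, Nat.mul_div_cancel _ hb, Fin.val_inj, sum_ite_eq',
    mem_univ, if_true]

theorem finrank_ker_blockSum (K : Type*) [DivisionRing K] (hb : 0 < b) (hmb : m * b ≤ n) :
    Module.finrank K (LinearMap.ker (blockSum K n m b)) = n - m := by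
  have := LinearMap.finrank_range_add_finrank_ker (blockSum K n m b)
  rw [LinearMap.range_eq_top.2 (blockSum_surjective hb hmb), finrank_top] at this
  simp only [Module.finrank_fin_fun] at this
  omega

theorem tightness_subspace_general
    {n k : ℕ} (hk : n - k < k) (hnk : 2 ≤ n - k) (hdvd : (n - k) ∣ k) :
    (∃ V : Submodule ℝ (Fin n → ℝ),
        (V : Set (Fin n → ℝ)) =
          {x | ∀ i < n - k,
            ∑ t ∈ Finset.univ.filter (fun t : Fin n => (t : ℕ) / (n / (n - k)) = i), x t = 0} ∧
        Module.finrank ℝ V = k) ∧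
    (∀ x : Fin n → ℝ,
        (∀ i < n - k,
          ∑ t ∈ Finset.univ.filter (fun t : Fin n => (t : ℕ) / (n / (n - k)) = i), x t = 0) →
        x ≠ 0 →
        ∀ t : Fin n, ∃ t' : Fin n, t' ≠ t ∧
          |x t'| ≥ |x t| * ((n : ℝ) - k) / k) := by
  set m := n - k
  set b := n / m
  have hkm : k + m = n := by omega
  have hmb : m * b = n := Nat.mul_div_cancel' (hkm ▸ dvd_add hdvd dvd_rfl)
  have hkb : k = m * (b - 1) := by rw [Nat.mul_sub_one, hmb]; omega
  have hb : 1 < b - 1 := Nat.lt_of_mul_lt_mul_left (a := m) (by rwa [mul_one, ← hkb])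
  have hblock (t : Fin n) : (t : ℕ) / b < m :=
    Nat.div_lt_of_lt_mul (by rw [mul_comm, hmb]; exact t.isLt)
  refine ⟨⟨LinearMap.ker (blockSum ℝ n m b), ?_, ?_⟩, fun x hx _ t => ?_⟩
  · ext x
    exact mem_ker_blockSum
  · rw [finrank_ker_blockSum ℝ (by omega) hmb.le]
    omega
  have hcard : #{t' : Fin n | (t' : ℕ) / b = t / b} = b :=
    Fin.card_filter_div_eq (by omega) ((Nat.mul_le_mul_right b (hblock t)).trans hmb.le)
  obtain ⟨t', -, hne, hle⟩ := exists_ne_abs_div_le_of_sum_eq_zero (hx _ (hblock t))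
    ((mem_filter_univ t).2 rfl) (by omega)
  refine ⟨t', hne, ?_⟩
  have hmR : (n : ℝ) - k = m := by rw [← hkm]; push_cast; ring
  have hkR : (k : ℝ) = m * ((b : ℝ) - 1) := by rw [hkb]; push_cast [show 1 ≤ b by omega]; ring
  rw [hcard] at hle
  calc |x t| * ((n : ℝ) - k) / k = |x t| / ((b : ℝ) - 1) := by
        rw [hmR, hkR]; field_simp
    _ ≤ |x t'| := hle
end

section
/- Let n ≥ 4 be even and c = n/2 − 1. Suppose m₀,…,m_{n−1} ∈ ℝ² are the columns of a rank-2 matrix, and suppose for every i there exists u_i ∈ ℝ² with Σ_{j=0}^{n−1} |⟨u_i, m_j⟩| = 1 and ⟨u_i, m_i⟩ > 1/(c+1). Then a contradiction follows; i.e., it is impossible that ⟨u_i, m_i⟩ > 2/n for all i under the normalization Σ_j |⟨u_i, m_j⟩| = 1. -/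
/-!
Put `A = (⟨u_i, m_j⟩)_{i,j} = U M`, where `U` has rows `u_i` and `M` has columns `m_j`. The
hypothesis says that every row of `A` has `ℓ¹`-norm one, so `‖A^k‖_∞ ≤ 1` and `|tr A^k| ≤ n`.
Since `A` factors through `ℝ²`, `tr A^k = tr B^k` for the `2 × 2` matrix `B = M U` and `k ≥ 1`.
For a `2 × 2` matrix, `tr B^{2k} = (tr B^k)^2 - 2 (det B)^k`, so bounded power traces force
`|det B| ≤ 1`; then `t_j = tr B^{2^j}` satisfies `t_{j+1} ≥ t_j^2 - 2`, which escapes to infinity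
as soon as `t_0 > 2`. Hence `Σ_i ⟨u_i, m_i⟩ = tr A = tr B ≤ 2`, whereas the separation
hypothesis makes it larger than `n · (2/n) = 2`.
-/

theorem sub_two_le_of_sq_sub_two_le {t : ℕ → ℝ} (h0 : 2 < t 0)
    (hstep : ∀ j, t j ^ 2 - 2 ≤ t (j + 1)) (j : ℕ) : 4 ^ j * (t 0 - 2) ≤ t j - 2 := by
  induction j with
  | zero => simp
  | succ j ih =>
    have hpos : 0 ≤ 4 ^ j * (t 0 - 2) := by positivity
    -- `4 (t_j - 2) ≤ (t_j + 2)(t_j - 2) = t_j ^ 2 - 4 ≤ t_{j+1} - 2`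
    rw [pow_succ]
    nlinarith [hstep j, sq_nonneg (t j - 2)]

namespace Matrix

variable {R : Type*}

theorem mul_pow_succ_eq_mul_pow_mul {l m : Type*} [Fintype l] [Fintype m] [DecidableEq l]
    [DecidableEq m] [Semiring R] (M : Matrix l m R) (U : Matrix m l R) (k : ℕ) :
    (M * U) ^ (k + 1) = M * (U * M) ^ k * U := by
  induction k with
  | zero => simp
  | succ k ih => rw [pow_succ, ih, pow_succ]; simp only [Matrix.mul_assoc]

theorem trace_mul_pow_succ_comm {l m : Type*} [Fintype l] [Fintype m] [DecidableEq l]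
    [DecidableEq m] [CommSemiring R] (M : Matrix l m R) (U : Matrix m l R) (k : ℕ) :
    trace ((M * U) ^ (k + 1)) = trace ((U * M) ^ (k + 1)) := by
  rw [mul_pow_succ_eq_mul_pow_mul, trace_mul_comm, ← Matrix.mul_assoc, ← pow_succ']

theorem trace_mul_self_fin_two [CommRing R] (C : Matrix (Fin 2) (Fin 2) R) :
    trace (C * C) = trace C ^ 2 - 2 * det C := by
  simp only [trace_fin_two, det_fin_two, mul_apply, Fin.sum_univ_two]
  ring

theorem trace_pow_two_mul_fin_two [CommRing R] (B : Matrix (Fin 2) (Fin 2) R) (k : ℕ) :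
    trace (B ^ (2 * k)) = trace (B ^ k) ^ 2 - 2 * det B ^ k := by
  rw [two_mul, pow_add, trace_mul_self_fin_two, det_pow]

section LinftyOpNorm

attribute [local instance] Matrix.linftyOpSeminormedAddCommGroup Matrix.linftyOpSemiNormedRing

variable {ι : Type*} [Fintype ι]

theorem sum_norm_le_linfty_opNorm {α κ : Type*} [Fintype κ] [SeminormedAddCommGroup α]
    (A : Matrix ι κ α) (i : ι) : ∑ j, ‖A i j‖ ≤ ‖A‖ := by
  have h := Finset.le_sup (f := fun i => ∑ j, ‖A i j‖₊) (Finset.mem_univ i)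
  rw [← NNReal.coe_le_coe, NNReal.coe_sum] at h
  simpa [linfty_opNorm_def] using h

theorem norm_trace_le_card_mul_linfty_opNorm {α : Type*} [SeminormedAddCommGroup α]
    (A : Matrix ι ι α) : ‖trace A‖ ≤ Fintype.card ι * ‖A‖ := by
  calc ‖trace A‖ ≤ ∑ i, ‖A i i‖ := norm_sum_le _ _
    _ ≤ ∑ _i : ι, ‖A‖ := Finset.sum_le_sum fun i _ =>
        (Finset.single_le_sum (fun j _ => norm_nonneg (A i j)) (Finset.mem_univ i)).trans
          (sum_norm_le_linfty_opNorm A i)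
    _ = Fintype.card ι * ‖A‖ := by simp

theorem abs_trace_pow_succ_le_card [DecidableEq ι] {A : Matrix ι ι ℝ}
    (hA : ∀ i, ∑ j, |A i j| ≤ 1) (k : ℕ) : |trace (A ^ (k + 1))| ≤ Fintype.card ι := by
  have hnorm : ‖A‖ ≤ 1 := by
    rw [linfty_opNorm_def]
    refine NNReal.coe_le_one.mpr (Finset.sup_le fun i _ => ?_)
    rw [← NNReal.coe_le_coe, NNReal.coe_sum]
    simpa using hA i
  calc |trace (A ^ (k + 1))| ≤ Fintype.card ι * ‖A ^ (k + 1)‖ := by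
        rw [← Real.norm_eq_abs]; exact norm_trace_le_card_mul_linfty_opNorm _
    _ ≤ Fintype.card ι * 1 := by
        gcongr
        exact (norm_pow_le' A k.succ_pos).trans (pow_le_one₀ (norm_nonneg A) hnorm)
    _ = Fintype.card ι := mul_one _

end LinftyOpNorm

theorem abs_det_le_one_of_abs_trace_pow_le {B : Matrix (Fin 2) (Fin 2) ℝ} {C : ℝ}
    (hC : ∀ k, |trace (B ^ (k + 1))| ≤ C) : |det B| ≤ 1 := by
  by_contra! hdet
  have hbound : ∀ k, 2 * |det B| ^ (k + 1) ≤ C ^ 2 + C := by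
    intro k
    have hsq := hC (2 * k + 1)
    rw [show 2 * k + 1 + 1 = 2 * (k + 1) by ring, trace_pow_two_mul_fin_two] at hsq
    set s := trace (B ^ (k + 1))
    calc 2 * |det B| ^ (k + 1) = |s ^ 2 - (s ^ 2 - 2 * det B ^ (k + 1))| := by
          rw [sub_sub_cancel, abs_mul, abs_pow, abs_two]
      _ ≤ |s| ^ 2 + C := by
          rw [← abs_pow]; exact (abs_sub _ _).trans (add_le_add_right hsq _)
      _ ≤ C ^ 2 + C := by gcongr; exact hC k
  obtain ⟨k, hk⟩ := pow_unbounded_of_one_lt ((C ^ 2 + C) / 2) hdet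
  linarith [hbound k, pow_le_pow_right₀ hdet.le (Nat.le_add_right k 1)]

theorem trace_le_two_of_abs_trace_pow_le {B : Matrix (Fin 2) (Fin 2) ℝ} {C : ℝ}
    (hC : ∀ k, |trace (B ^ (k + 1))| ≤ C) : trace B ≤ 2 := by
  by_contra! htr
  set t : ℕ → ℝ := fun j => trace (B ^ 2 ^ j) with ht
  have hstep : ∀ j, t j ^ 2 - 2 ≤ t (j + 1) := by
    intro j
    have hdet : det B ^ 2 ^ j ≤ 1 := (le_abs_self _).trans <| by
      rw [abs_pow]; exact pow_le_one₀ (abs_nonneg _) (abs_det_le_one_of_abs_trace_pow_le hC)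
    simp only [ht, pow_succ', trace_pow_two_mul_fin_two]
    linarith
  have hbdd : ∀ j, t j ≤ C := fun j => by
    have h := hC (2 ^ j - 1)
    rw [Nat.sub_add_cancel Nat.one_le_two_pow] at h
    exact (le_abs_self _).trans h
  obtain ⟨j, hj⟩ :=
    pow_unbounded_of_one_lt ((C - 2) / (trace B - 2)) (by norm_num : (1 : ℝ) < 4)
  rw [div_lt_iff₀ (by linarith)] at hj
  have ht0 : t 0 = trace B := by simp [ht]
  have hgrowth := sub_two_le_of_sq_sub_two_le (t := t) (ht0 ▸ htr) hstep j
  rw [ht0] at hgrowth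
  linarith [hbdd j]

end Matrix

open Matrix in
theorem no_uniform_separation_codim_two_general
    {n : ℕ} (hn : 4 ≤ n)
    (m : Fin n → (Fin 2 → ℝ))
    (u : Fin n → (Fin 2 → ℝ))
    (hnorm : ∀ i, ∑ j, |u i ⬝ᵥ m j| = 1)
    (hsep : ∀ i, u i ⬝ᵥ m i > 1 / (((n : ℝ) / 2 - 1) + 1)) :
    False := by
  set U : Matrix (Fin n) (Fin 2) ℝ := of u
  set M : Matrix (Fin 2) (Fin n) ℝ := (of m)ᵀ
  have hUM : ∀ i j, (U * M) i j = u i ⬝ᵥ m j := fun _ _ => rfl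
  have hbound : ∀ k, |trace ((M * U) ^ (k + 1))| ≤ (n : ℝ) := fun k => by
    rw [trace_mul_pow_succ_comm]
    simpa using abs_trace_pow_succ_le_card (A := U * M)
      (fun i => by simp only [hUM, hnorm, le_refl]) k
  have hdiag : ∀ i, 2 / (n : ℝ) < u i ⬝ᵥ m i := fun i => by
    simpa [sub_add_cancel, one_div_div] using hsep i
  have htrace : 2 < trace (M * U) := by
    have : Nonempty (Fin n) := ⟨⟨0, by omega⟩⟩
    calc (2 : ℝ) = ∑ _i : Fin n, 2 / (n : ℝ) := by
          rw [Finset.sum_const, Finset.card_univ, Fintype.card_fin, nsmul_eq_mul]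
          field_simp
      _ < ∑ i, u i ⬝ᵥ m i :=
          Finset.sum_lt_sum_of_nonempty Finset.univ_nonempty fun i _ => hdiag i
      _ = trace (M * U) := by rw [trace_mul_comm]; rfl
  linarith [trace_le_two_of_abs_trace_pow_le hbound]

open Matrix in
theorem no_uniform_separation_codim_two
    {n : ℕ} (hn : 4 ≤ n) (heven : Even n)
    (m : Fin n → (Fin 2 → ℝ))
    (hrank : (Matrix.of fun (i : Fin 2) (j : Fin n) => m j i).rank = 2)
    (u : Fin n → (Fin 2 → ℝ))
    (hnorm : ∀ i, ∑ j, |u i ⬝ᵥ m j| = 1)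
    (hsep : ∀ i, u i ⬝ᵥ m i > 1 / (((n : ℝ) / 2 - 1) + 1)) :
    False :=
  no_uniform_separation_codim_two_general hn m u hnorm hsep
end
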